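/- Let ℓ ≥ 2, and let P be a finite set of points in ℝ² with no ℓ collinear points and no empty pentagon. Let A ⊆ P be a hull-minimal weakly convex 8ℓ-gon in P with P ⊆ conv(A), so that A is the first convex layer of P, and let B be the second convex layer of P, with B ≠ ∅. Then for every edge b of B, the set A ∩ b⁺ is collinear (all its points lie on one line). -/

import Mathlib

open Set

/-- Points in the plane. -/
abbrev Pt : Type := ℝ × ℝ

/-- The 2×2 determinant of two vectors in the plane. -/
def det2 (u v : Pt) : ℝ := u.1 * v.2 - u.2 * v.1

/-- The line through two points `u v` (all of `ℝ²` if `u = v`). -/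
def lineThrough (u v : Pt) : Set Pt := {x | det2 (v - u) (x - u) = 0}

/-- The open half-plane on the positive side of the oriented line `u v`. -/
def sidePos (u v : Pt) : Set Pt := {x | 0 < det2 (v - u) (x - u)}

/-- The open half-plane on the negative side of the oriented line `u v`. -/
def sideNeg (u v : Pt) : Set Pt := {x | det2 (v - u) (x - u) < 0}

/-- `X` is in strictly convex position: every point of `X` is an extreme
point of the convex hull of `X`. -/
def StrictlyConvexPos (X : Set Pt) : Prop :=
  ∀ x ∈ X, x ∈ Set.extremePoints ℝ (convexHull ℝ X)

/-- `X` is in weakly convex position: every point of `X` lies on the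
frontier of the convex hull of `X`. -/
def WeaklyConvexPos (X : Set Pt) : Prop :=
  ∀ x ∈ X, x ∈ frontier (convexHull ℝ X)

/-- `X` is an empty pentagon in `P`. -/
def EmptyPentagonIn (P X : Set Pt) : Prop :=
  X ⊆ P ∧ X.ncard = 5 ∧ StrictlyConvexPos X ∧ P ∩ convexHull ℝ X = X

/-- `P` contains an empty pentagon. -/
def HasEmptyPentagon (P : Set Pt) : Prop := ∃ X, EmptyPentagonIn P X

/-- `P` contains `ℓ` collinear points: some line contains at least `ℓ` points of `P`. -/
def HasCollinearPoints (P : Set Pt) (ℓ : ℕ) : Prop :=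
  ∃ S ⊆ P, S.Finite ∧ ℓ ≤ S.ncard ∧ Collinear ℝ S

/-- `c` lies strictly to the left of the oriented line from `a` to `b`. -/
def ccwStrict (a b c : Pt) : Prop := 0 < det2 (b - a) (c - a)

/-- The list of points `l` is the vertex list of a strictly convex polygon
traversed counterclockwise: for every directed edge (consecutive in the cyclic
order), all other listed points lie strictly to its left. -/
def StrictConvexCCWList (l : List Pt) : Prop :=
  3 ≤ l.length ∧
  ∀ i j : Fin l.length, j ≠ i → j.val ≠ (i.val + 1) % l.length →
    ccwStrict (l.get i) (l.get ⟨(i.val + 1) % l.length, Nat.mod_lt _ i.pos⟩) (l.get j)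

/-- The points of the list `l` are in strictly convex position, appearing in
this cyclic order (in one of the two orientations) on their convex hull. -/
def StrictConvexCyclic (l : List Pt) : Prop :=
  StrictConvexCCWList l ∨ StrictConvexCCWList l.reverse

/-- `[u,v]` is an edge of the (weakly convex) point set `L`: a segment between
distinct points of `L` lying in the frontier of the convex hull of `L` whose
relative interior contains no point of `L`. -/
def IsEdgeOf (L : Set Pt) (u v : Pt) : Prop :=
  u ∈ L ∧ v ∈ L ∧ u ≠ v ∧ segment ℝ u v ⊆ frontier (convexHull ℝ L) ∧
    openSegment ℝ u v ∩ L = ∅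

/-- `H` is the open half-plane bounded by the line through the edge `u v` of `B`
that contains no point of `B` (the half-plane `b⁺`). -/
def IsPosSide (B : Set Pt) (u v : Pt) (H : Set Pt) : Prop :=
  (H = sidePos u v ∨ H = sideNeg u v) ∧ H ∩ B = ∅

/-- `P` minus its first `n` convex layers. -/
def layerRest (P : Set Pt) : ℕ → Set Pt
  | 0 => P
  | n + 1 => layerRest P n \ frontier (convexHull ℝ (layerRest P n))

/-- The `i`-th convex layer of `P` (1-based). -/
def cLayer (P : Set Pt) (i : ℕ) : Set Pt :=
  layerRest P (i - 1) ∩ frontier (convexHull ℝ (layerRest P (i - 1)))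

/-- `A` is a hull-minimal weakly convex `m`-gon in `P`. -/
def HullMinimalWeakGon (P A : Set Pt) (m : ℕ) : Prop :=
  A ⊆ P ∧ A.ncard = m ∧ WeaklyConvexPos A ∧
  ∀ A' ⊆ P, A'.Finite → m ≤ A'.ncard → WeaklyConvexPos A' →
    ¬ convexHull ℝ A' ⊂ convexHull ℝ A

/-- The open triangle with corners `x`, `y`, `z`. -/
def openTriangle (x y z : Pt) : Set Pt := interior (convexHull ℝ {x, y, z})

/-- With respect to the fixed point `z`, the edge `x y` of the `i`-th convex
layer of `P` is empty: the open triangle `Δ(x,y,z)` contains no point of the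
`(i+1)`-st layer. -/
def IsEmptyEdge (P : Set Pt) (z : Pt) (i : ℕ) (x y : Pt) : Prop :=
  IsEdgeOf (cLayer P i) x y ∧ openTriangle x y z ∩ cLayer P (i + 1) = ∅

/-- `y` is the point of `L` immediately clockwise (as seen from the interior
point `z`) from the point `x` of the frontier of `conv L`. -/
def IsNextCW (z : Pt) (L : Set Pt) (x y : Pt) : Prop :=
  y ∈ L ∧ y ≠ x ∧ x ∈ frontier (convexHull ℝ L) ∧
  segment ℝ x y ⊆ frontier (convexHull ℝ L) ∧
  openSegment ℝ x y ∩ L = ∅ ∧ det2 (x - z) (y - z) < 0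

/-- `y` is the point of `L` immediately anticlockwise (as seen from the interior
point `z`) from the point `x` of the frontier of `conv L`. -/
def IsNextACW (z : Pt) (L : Set Pt) (x y : Pt) : Prop :=
  y ∈ L ∧ y ≠ x ∧ x ∈ frontier (convexHull ℝ L) ∧
  segment ℝ x y ⊆ frontier (convexHull ℝ L) ∧
  openSegment ℝ x y ∩ L = ∅ ∧ 0 < det2 (x - z) (y - z)

/-- `x` is the point of `conv L ∩ [v,z]` closest to `v`. -/
def ClosestOnSeg (L : Set Pt) (v z x : Pt) : Prop :=
  x ∈ convexHull ℝ L ∩ segment ℝ v z ∧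
  ∀ w ∈ convexHull ℝ L ∩ segment ℝ v z, dist v x ≤ dist v w

/-- `q` is the right child of the point `v` of the `i`-th convex layer of `P`
(with respect to the fixed point `z`). -/
def IsRightChild (P : Set Pt) (z : Pt) (i : ℕ) (v q : Pt) : Prop :=
  v ∈ cLayer P i ∧
  ∃ x, ClosestOnSeg (cLayer P (i + 1)) v z x ∧ IsNextCW z (cLayer P (i + 1)) x q

/-- `q` is the left child of the point `v` of the `i`-th convex layer of `P`
(with respect to the fixed point `z`). -/
def IsLeftChild (P : Set Pt) (z : Pt) (i : ℕ) (v q : Pt) : Prop :=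
  v ∈ cLayer P i ∧
  ∃ x, ClosestOnSeg (cLayer P (i + 1)) v z x ∧ IsNextACW z (cLayer P (i + 1)) x q

/-- `c 0, …, c (t-1)` is a right chain starting in layer `s`. -/
def IsRightChain (P : Set Pt) (z : Pt) (s t : ℕ) (c : ℕ → Pt) : Prop :=
  (∀ i, i < t → c i ∈ cLayer P (s + i)) ∧
  ∀ i, i + 1 < t → IsRightChild P z (s + i) (c i) (c (i + 1))

/-- `c 0, …, c (t-1)` is a left chain starting in layer `s`. -/
def IsLeftChain (P : Set Pt) (z : Pt) (s t : ℕ) (c : ℕ → Pt) : Prop :=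
  (∀ i, i < t → c i ∈ cLayer P (s + i)) ∧
  ∀ i, i + 1 < t → IsLeftChild P z (s + i) (c i) (c (i + 1))

/-- The ray starting at `z` with direction `d`. -/
def Ray (z d : Pt) : Set Pt := {p | ∃ t : ℝ, 0 ≤ t ∧ p = z + t • d}

/-- The chain `c 0, …, c (t-1)` wraps around `z`: every ray starting at `z`
meets the union of the edges of the chain at least twice. -/
def WrapsAround (z : Pt) (t : ℕ) (c : ℕ → Pt) : Prop :=
  ∀ d : Pt, d ≠ 0 → ∃ i j : ℕ, i + 1 < t ∧ j + 1 < t ∧ i ≠ j ∧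
    (Ray z d ∩ segment ℝ (c i) (c (i + 1))).Nonempty ∧
    (Ray z d ∩ segment ℝ (c j) (c (j + 1))).Nonempty

/-- The (open) 4-sector of a strictly convex quadrilateral `p₁ p₂ p₃ p₄`:
the set of points `q` such that `q, p₁, p₂, p₃, p₄` are five points in
strictly convex position in this cyclic order. -/
def Sector (p₁ p₂ p₃ p₄ : Pt) : Set Pt := {q | StrictConvexCyclic [q, p₁, p₂, p₃, p₄]}

/-- The closed 4-sector of a strictly convex quadrilateral. -/
def ClosedSector (p₁ p₂ p₃ p₄ : Pt) : Set Pt := closure (Sector p₁ p₂ p₃ p₄)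

/-!
The points of `P` in the open half-plane `b⁺` lie on the frontier of `conv P`: the deeper layers
lie in `conv B`, which is on the other side of `l(b)`. The endpoints `u`, `v` of `b` lie in the
interior of `conv P`, and no point of `P` lies strictly between them. If `P ∩ b⁺` were not
collinear, a non-degenerate triangle `p q r` of minimal area with vertices in `P ∩ b⁺` would
contain no further point of `P ∩ b⁺`, and `{u, v, p, q, r}` would be an empty pentagon: a point
of the frontier of `conv P` in its hull is already in `conv {p, q, r}`, and a point of `l(b)` in its
hull lies on the segment `[u, v]`.
-/

section ConvexHull

variable {E : Type*} [AddCommGroup E] [Module ℝ E]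

lemma mem_convexHull_of_mem_convexHull_union_of_nonpos (f : E →ᵃ[ℝ] ℝ) {s t : Set E}
    (hs : ∀ x ∈ s, f x = 0) (ht : ∀ x ∈ t, 0 < f x) {z : E}
    (hz : z ∈ convexHull ℝ (s ∪ t)) (hfz : f z ≤ 0) : z ∈ convexHull ℝ s := by
  have hpos : convexHull ℝ t ⊆ f ⁻¹' Ioi 0 :=
    convexHull_min ht ((convex_Ioi 0).affine_preimage f)
  rcases s.eq_empty_or_nonempty with rfl | hs₀
  · exact absurd (hpos (by simpa using hz)) (not_lt.2 hfz)
  rcases t.eq_empty_or_nonempty with rfl | ht₀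
  · simpa using hz
  rw [convexHull_union hs₀ ht₀, mem_convexJoin] at hz
  obtain ⟨a, ha, b, hb, θ, θ', hθ, hθ', hθθ', rfl⟩ := hz
  have hfa : f a = 0 := convexHull_min hs ((convex_singleton 0).affine_preimage f) ha
  have hfb : 0 < f b := hpos hb
  rw [Convex.combo_affine_apply hθθ', hfa, smul_eq_mul, smul_eq_mul] at hfz
  obtain rfl : θ' = 0 := by nlinarith
  simpa [show θ = 1 by linarith] using ha

variable [TopologicalSpace E] [IsTopologicalAddGroup E] [ContinuousConstSMul ℝ E]

lemma mem_convexHull_of_mem_convexHull_union_of_notMem_interior {K s t : Set E}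
    (hK : Convex ℝ K) (hs : s ⊆ interior K) (ht : t ⊆ K) {z : E}
    (hz : z ∈ convexHull ℝ (s ∪ t)) (hzK : z ∉ interior K) : z ∈ convexHull ℝ t := by
  have hsK : convexHull ℝ s ⊆ interior K := convexHull_min hs hK.interior
  rcases t.eq_empty_or_nonempty with rfl | ht₀
  · exact absurd (hsK (by simpa using hz)) hzK
  rcases s.eq_empty_or_nonempty with rfl | hs₀
  · simpa using hz
  rw [convexHull_union hs₀ ht₀, mem_convexJoin] at hz
  obtain ⟨a, ha, b, hb, θ, θ', hθ, hθ', hθθ', rfl⟩ := hz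
  obtain rfl | hθpos := hθ.eq_or_lt
  · simpa [show θ' = 1 by linarith] using hb
  exact absurd (hK.combo_interior_self_mem_interior (hsK ha)
    (convexHull_min ht hK hb) hθpos hθ' hθθ') hzK

end ConvexHull

section ExtremePoints

variable {E : Type*} [AddCommGroup E] [Module ℝ E] [TopologicalSpace E] [T2Space E]
  [IsTopologicalAddGroup E] [ContinuousSMul ℝ E] [LocallyConvexSpace ℝ E] {s : Set E}

lemma Set.Finite.convexHull_extremePoints_convexHull (hs : s.Finite) :
    convexHull ℝ ((convexHull ℝ s).extremePoints ℝ) = convexHull ℝ s := by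
  have h := closure_convexHull_extremePoints (hs.isCompact_convexHull ℝ) (convex_convexHull ℝ s)
  rwa [((hs.subset extremePoints_convexHull_subset).isClosed_convexHull ℝ).closure_eq] at h

lemma Set.Finite.mem_extremePoints_convexHull (hs : s.Finite) {x : E} (hx : x ∈ s)
    (hxs : x ∉ convexHull ℝ (s \ {x})) : x ∈ (convexHull ℝ s).extremePoints ℝ := by
  by_contra h
  refine hxs (convexHull_mono (s := (convexHull ℝ s).extremePoints ℝ) ?_ ?_)
  · intro y hy
    refine ⟨extremePoints_convexHull_subset hy, ?_⟩
    rintro rfl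
    exact h hy
  · rw [hs.convexHull_extremePoints_convexHull]
    exact subset_convexHull ℝ s hx

lemma Set.Finite.convexHull_inter_frontier [Nontrivial E] (hs : s.Finite) :
    convexHull ℝ (s ∩ frontier (convexHull ℝ s)) = convexHull ℝ s := by
  refine (convexHull_mono inter_subset_left).antisymm ?_
  conv_lhs => rw [← hs.convexHull_extremePoints_convexHull]
  refine convexHull_mono fun x hx => ⟨extremePoints_convexHull_subset hx, ?_⟩
  rw [mem_frontier_iff_notMem_interior hx.1]
  exact (disjoint_interior_extremePoints _).notMem_of_mem_right hx

end ExtremePoints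

lemma strictlyConvexPos_of_notMem_convexHull_sdiff {X : Set Pt} (hX : X.Finite)
    (h : ∀ x ∈ X, x ∉ convexHull ℝ (X \ {x})) : StrictlyConvexPos X :=
  fun x hx => hX.mem_extremePoints_convexHull hx (h x hx)

lemma convexHull_cLayer_two {P : Set Pt} (hP : P.Finite) :
    convexHull ℝ (cLayer P 2) = convexHull ℝ (P \ frontier (convexHull ℝ P)) :=
  hP.sdiff.convexHull_inter_frontier

lemma exists_eq_combo_of_mem_convexHull_triple {E : Type*} [AddCommGroup E] [Module ℝ E]
    {p q r z : E} (hz : z ∈ convexHull ℝ {p, q, r}) :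
    ∃ a b c : ℝ, 0 ≤ a ∧ 0 ≤ b ∧ 0 ≤ c ∧ a + b + c = 1 ∧
      z = a • p + b • q + c • r := by
  rw [convexHull_insert (insert_nonempty _ _), convexHull_pair, mem_convexJoin] at hz
  obtain ⟨_, rfl, w, ⟨b, c, hb, hc, hbc, rfl⟩, ⟨s, t, hs, ht, hst, rfl⟩⟩ := hz
  refine ⟨s, t * b, t * c, hs, by positivity, by positivity, ?_, by module⟩
  linear_combination t * hbc + hst

/-- Twice the signed area of the triangle `p q r`. -/
def orient (p q r : Pt) : ℝ := det2 (q - p) (r - p)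

def orientAffine (u v : Pt) : Pt →ᵃ[ℝ] ℝ where
  toFun := orient u v
  linear := (v - u).1 • LinearMap.snd ℝ ℝ ℝ - (v - u).2 • LinearMap.fst ℝ ℝ ℝ
  map_vadd' x d := by simp [orient, det2]; ring

@[simp] lemma orientAffine_apply (u v x : Pt) : orientAffine u v x = orient u v x := rfl

lemma mem_sidePos_iff {u v x : Pt} : x ∈ sidePos u v ↔ 0 < orient u v x := Iff.rfl

@[simp] lemma orient_self_left (u v : Pt) : orient u v u = 0 := by simp [orient, det2]

@[simp] lemma orient_self_right (u v : Pt) : orient u v v = 0 := by simp [orient, det2]; ring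

lemma orient_rotate (p q r : Pt) : orient q r p = orient p q r := by simp [orient, det2]; ring

lemma orient_swap (p q r : Pt) : orient q p r = -orient p q r := by simp [orient, det2]; ring

lemma sideNeg_eq_sidePos_swap (u v : Pt) : sideNeg u v = sidePos v u := by
  ext x
  change orient u v x < 0 ↔ 0 < orient v u x
  rw [orient_swap, neg_lt_zero]

lemma orient_eq_zero_of_mem_segment {p q r : Pt} (hp : p ∈ segment ℝ q r) :
    orient p q r = 0 := by
  obtain ⟨a, b, -, -, hab, rfl⟩ := hp
  obtain rfl : b = 1 - a := by linarith
  simp [orient, det2]; ring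

lemma orient_combo {p q r : Pt} {a b c : ℝ} (habc : a + b + c = 1) :
    orient (a • p + b • q + c • r) q r = a * orient p q r ∧
      orient p (a • p + b • q + c • r) r = b * orient p q r ∧
      orient p q (a • p + b • q + c • r) = c * orient p q r := by
  obtain rfl : c = 1 - a - b := by linarith
  refine ⟨?_, ?_, ?_⟩ <;> simp [orient, det2] <;> ring

lemma exists_eq_smul_of_det2_eq_zero {v w : Pt} (hv : v ≠ 0) (h : det2 v w = 0) :
    ∃ t : ℝ, w = t • v := by
  unfold det2 at h
  by_cases h1 : v.1 = 0
  · have h2 : v.2 ≠ 0 := fun h2 => hv (Prod.ext h1 h2)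
    refine ⟨w.2 / v.2, Prod.ext ?_ (div_mul_cancel₀ _ h2).symm⟩
    simp only [h1, zero_mul, zero_sub, neg_eq_zero, mul_eq_zero, h2, false_or] at h
    simp [h, h1]
  · refine ⟨w.1 / v.1, Prod.ext (div_mul_cancel₀ _ h1).symm ?_⟩
    change w.2 = w.1 / v.1 * v.2
    rw [div_mul_eq_mul_div, eq_div_iff h1]
    linarith

lemma collinear_of_forall_orient_eq_zero {C : Set Pt}
    (h : ∀ p ∈ C, ∀ q ∈ C, ∀ r ∈ C, orient p q r = 0) : Collinear ℝ C := by
  rcases C.subsingleton_or_nontrivial with hs | ⟨p, hp, q, hq, hpq⟩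
  · rcases hs.eq_empty_or_singleton with rfl | ⟨p, rfl⟩
    exacts [collinear_empty ℝ Pt, collinear_singleton ℝ p]
  rw [collinear_iff_of_mem hp]
  refine ⟨q - p, fun r hr => ?_⟩
  obtain ⟨t, ht⟩ := exists_eq_smul_of_det2_eq_zero (sub_ne_zero.2 hpq.symm) (h p hp q hq r hr)
  exact ⟨t, by rw [← ht, vadd_eq_add, sub_add_cancel]⟩

lemma exists_orient_ne_zero_forall_mem_convexHull {C : Set Pt} (hC : C.Finite)
    (h : ∃ p ∈ C, ∃ q ∈ C, ∃ r ∈ C, orient p q r ≠ 0) :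
    ∃ p ∈ C, ∃ q ∈ C, ∃ r ∈ C, orient p q r ≠ 0 ∧
      ∀ z ∈ C, z ∈ convexHull ℝ {p, q, r} → z = p ∨ z = q ∨ z = r := by
  set T := {x : Pt × Pt × Pt |
    x.1 ∈ C ∧ x.2.1 ∈ C ∧ x.2.2 ∈ C ∧ orient x.1 x.2.1 x.2.2 ≠ 0}
  have hT : T.Finite := (hC.prod (hC.prod hC)).subset fun x hx => ⟨hx.1, hx.2.1, hx.2.2.1⟩
  obtain ⟨p, hp, q, hq, r, hr, hpqr⟩ := h
  obtain ⟨⟨p, q, r⟩, ⟨hp, hq, hr, hpqr⟩, hmin⟩ :=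
    T.exists_min_image (fun x => |orient x.1 x.2.1 x.2.2|) hT ⟨(p, q, r), hp, hq, hr, hpqr⟩
  refine ⟨p, hp, q, hq, r, hr, hpqr, fun z hzC hz => ?_⟩
  -- Replacing a vertex by `z` scales the area by the barycentric coordinate of that vertex,
  -- so by minimality each coordinate is `0` or at least `1`.
  have hcoord : ∀ {s : ℝ} {x y w : Pt}, 0 ≤ s → x ∈ C → y ∈ C → w ∈ C →
      orient x y w = s * orient p q r → s = 0 ∨ 1 ≤ s := by
    intro s x y w hs hx hy hw hxyw
    refine or_iff_not_imp_left.2 fun hs0 => ?_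
    have h := hmin (x, y, w) ⟨hx, hy, hw, by rw [hxyw]; exact mul_ne_zero hs0 hpqr⟩
    simp only [hxyw, abs_mul, abs_of_nonneg hs] at h
    nlinarith [abs_pos.2 hpqr]
  obtain ⟨a, b, c, ha, hb, hc, habc, rfl⟩ := exists_eq_combo_of_mem_convexHull_triple hz
  obtain ⟨hza, hzb, hzc⟩ := orient_combo (p := p) (q := q) (r := r) habc
  rcases hcoord ha hzC hq hr hza with rfl | ha1 <;>
    rcases hcoord hb hp hzC hr hzb with rfl | hb1 <;>
    rcases hcoord hc hp hq hzC hzc with rfl | hc1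
  · norm_num at habc
  · obtain rfl : c = 1 := by linarith
    simp
  · obtain rfl : b = 1 := by linarith
    simp
  · linarith
  · obtain rfl : a = 1 := by linarith
    simp
  all_goals linarith

lemma pentagon_eq_union (u v p q r : Pt) :
    ({u, v, p, q, r} : Set Pt) = {u, v} ∪ {p, q, r} := by
  rw [insert_union, singleton_union]

section Pentagon

variable {K : Set Pt} {u v p q r : Pt}

lemma ncard_pentagon (huv : u ≠ v) (hp : p ∈ sidePos u v) (hq : q ∈ sidePos u v)
    (hr : r ∈ sidePos u v) (hpqr : orient p q r ≠ 0) :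
    ({u, v, p, q, r} : Set Pt).ncard = 5 := by
  have hne : ∀ x ∈ sidePos u v, x ≠ u ∧ x ≠ v := by
    rintro x hx
    refine ⟨?_, ?_⟩ <;> rintro rfl <;> simp [mem_sidePos_iff] at hx
  have hpq : p ≠ q := by rintro rfl; simp [orient, det2] at hpqr
  have hpr : p ≠ r := by rintro rfl; simp at hpqr
  have hqr : q ≠ r := by rintro rfl; simp at hpqr
  rw [Set.ncard_insert_of_notMem, Set.ncard_insert_of_notMem, Set.ncard_insert_of_notMem,
    Set.ncard_pair hqr]
  all_goals simp_all [eq_comm]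

lemma strictlyConvexPos_pentagon (hK : Convex ℝ K) (huv : u ≠ v)
    (hu : u ∈ interior K) (hv : v ∈ interior K)
    (hpK : p ∈ K \ interior K) (hqK : q ∈ K \ interior K) (hrK : r ∈ K \ interior K)
    (hp : p ∈ sidePos u v) (hq : q ∈ sidePos u v) (hr : r ∈ sidePos u v)
    (hpqr : orient p q r ≠ 0) : StrictlyConvexPos {u, v, p, q, r} := by
  have hpos : ∀ x ∈ ({p, q, r} : Set Pt), 0 < orientAffine u v x := by
    simpa [forall_and] using ⟨hp, hq, hr⟩
  have hbase : ∀ {x y : Pt}, x ∈ ({u, v} : Set Pt) → y ∈ ({u, v} : Set Pt) → x ≠ y →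
      x ∉ convexHull ℝ ({y} ∪ {p, q, r}) := by
    intro x y hx hy hxy hxX
    have hfy : ∀ z ∈ ({y} : Set Pt), orientAffine u v z = 0 := by
      rcases hy with rfl | rfl <;> simp
    have hfx : orientAffine u v x ≤ 0 := by rcases hx with rfl | rfl <;> simp
    simpa [hxy] using mem_convexHull_of_mem_convexHull_union_of_nonpos _ hfy hpos hxX hfx
  have hapex : ∀ {x y w : Pt}, x ∈ K \ interior K → y ∈ K → w ∈ K →
      orient x y w ≠ 0 → x ∉ convexHull ℝ ({u, v} ∪ {y, w}) := by
    intro x y w hx hy hw hxyw hxX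
    have hseg := mem_convexHull_of_mem_convexHull_union_of_notMem_interior hK
      (pair_subset hu hv) (pair_subset hy hw) hxX hx.2
    rw [convexHull_pair] at hseg
    exact hxyw (orient_eq_zero_of_mem_segment hseg)
  refine strictlyConvexPos_of_notMem_convexHull_sdiff (toFinite _) fun x hx hxX => ?_
  rcases hx with rfl | rfl | rfl | rfl | rfl
  · exact hbase (by simp) (by simp) huv (convexHull_mono (by intro; simp; tauto) hxX)
  · exact hbase (by simp) (by simp) huv.symm (convexHull_mono (by intro; simp; tauto) hxX)
  · exact hapex hpK hqK.1 hrK.1 hpqr (convexHull_mono (by intro; simp; tauto) hxX)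
  · exact hapex hqK hrK.1 hpK.1 (by rwa [orient_rotate])
      (convexHull_mono (by intro; simp; tauto) hxX)
  · exact hapex hrK hpK.1 hqK.1 (by rwa [orient_rotate, orient_rotate])
      (convexHull_mono (by intro; simp; tauto) hxX)

lemma inter_convexHull_pentagon {P : Set Pt} (hK : Convex ℝ K) (hPK : P ⊆ K)
    (hX : {u, v, p, q, r} ⊆ P) (hu : u ∈ interior K) (hv : v ∈ interior K)
    (hp : p ∈ sidePos u v) (hq : q ∈ sidePos u v) (hr : r ∈ sidePos u v)
    (huv : ∀ z ∈ P, z ∉ openSegment ℝ u v)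
    (hside : ∀ z ∈ P, z ∈ sidePos u v → z ∉ interior K)
    (hpqr : ∀ z ∈ P, z ∈ sidePos u v → z ∈ convexHull ℝ {p, q, r} →
      z = p ∨ z = q ∨ z = r) :
    P ∩ convexHull ℝ {u, v, p, q, r} = {u, v, p, q, r} := by
  refine (subset_inter hX (subset_convexHull ℝ _)).antisymm' fun z ⟨hzP, hz⟩ => ?_
  rw [pentagon_eq_union] at hX hz ⊢
  rcases le_or_gt (orient u v z) 0 with hz0 | hz0
  · have hline : ∀ x ∈ ({u, v} : Set Pt), orientAffine u v x = 0 := by simp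
    have hpos : ∀ x ∈ ({p, q, r} : Set Pt), 0 < orientAffine u v x := by
      simpa [forall_and] using ⟨hp, hq, hr⟩
    have hzuv := mem_convexHull_of_mem_convexHull_union_of_nonpos _ hline hpos hz hz0
    rw [convexHull_pair] at hzuv
    by_cases hzu : z = u
    · simp [hzu]
    by_cases hzv : z = v
    · simp [hzv]
    exact absurd (mem_openSegment_of_ne_left_right (Ne.symm hzu) (Ne.symm hzv) hzuv) (huv z hzP)
  · have hzpqr := mem_convexHull_of_mem_convexHull_union_of_notMem_interior hK
      (pair_subset hu hv) ((union_subset_iff.1 hX).2.trans hPK)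
      hz (hside z hzP hz0)
    rcases hpqr z hzP hz0 hzpqr with rfl | rfl | rfl <;> simp

end Pentagon

lemma IsEdgeOf.symm {L : Set Pt} {u v : Pt} (he : IsEdgeOf L u v) : IsEdgeOf L v u := by
  obtain ⟨hu, hv, huv, hseg, hopen⟩ := he
  exact ⟨hv, hu, huv.symm, segment_symm ℝ u v ▸ hseg, openSegment_symm ℝ u v ▸ hopen⟩

section Layers

variable {P : Set Pt} {u v z : Pt}

lemma mem_sdiff_frontier_convexHull_iff (hz : z ∈ P) :
    z ∈ P \ frontier (convexHull ℝ P) ↔ z ∈ interior (convexHull ℝ P) :=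
  (and_iff_right hz).trans (mem_interior_iff_notMem_frontier (subset_convexHull ℝ P hz)).symm

lemma cLayer_two_subset : cLayer P 2 ⊆ P := fun _ hz => hz.1.1

lemma cLayer_two_subset_interior : cLayer P 2 ⊆ interior (convexHull ℝ P) :=
  fun _ hz => (mem_sdiff_frontier_convexHull_iff hz.1.1).1 hz.1

lemma notMem_interior_of_mem_sidePos (hP : P.Finite) (hH : sidePos u v ∩ cLayer P 2 = ∅)
    (hz : z ∈ P) (hzH : z ∈ sidePos u v) : z ∉ interior (convexHull ℝ P) := by
  intro hzK
  have hside : convexHull ℝ (cLayer P 2) ⊆ orientAffine u v ⁻¹' Iic 0 :=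
    convexHull_min (fun x hx => show orient u v x ≤ 0 from
      not_lt.1 fun hx' => hH.subset ⟨hx', hx⟩) ((convex_Iic 0).affine_preimage _)
  rw [convexHull_cLayer_two hP] at hside
  have hzQ := subset_convexHull ℝ _ ((mem_sdiff_frontier_convexHull_iff hz).2 hzK)
  exact (hside hzQ : orient u v z ≤ 0).not_gt (mem_sidePos_iff.1 hzH)

lemma notMem_openSegment_of_isEdgeOf_cLayer_two (hP : P.Finite) (he : IsEdgeOf (cLayer P 2) u v)
    (hz : z ∈ P) : z ∉ openSegment ℝ u v := by
  obtain ⟨hu, hv, -, hseg, hopen⟩ := he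
  intro hzuv
  have hzK := (convex_convexHull ℝ P).interior.openSegment_subset
    (cLayer_two_subset_interior hu) (cLayer_two_subset_interior hv) hzuv
  have hzB : z ∈ cLayer P 2 := by
    refine ⟨(mem_sdiff_frontier_convexHull_iff hz).2 hzK, ?_⟩
    change z ∈ frontier (convexHull ℝ (P \ frontier (convexHull ℝ P)))
    rw [← convexHull_cLayer_two hP]
    exact hseg (openSegment_subset_segment ℝ u v hzuv)
  exact hopen.subset ⟨hzuv, hzB⟩

theorem collinear_inter_sidePos_of_isEdgeOf_cLayer_two (hP : P.Finite)
    (hpent : ¬ HasEmptyPentagon P) (he : IsEdgeOf (cLayer P 2) u v)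
    (hH : sidePos u v ∩ cLayer P 2 = ∅) : Collinear ℝ (P ∩ sidePos u v) := by
  by_contra hcol
  obtain ⟨p, ⟨hpP, hp⟩, q, ⟨hqP, hq⟩, r, ⟨hrP, hr⟩, hpqr, hempty⟩ :=
    exists_orient_ne_zero_forall_mem_convexHull (C := P ∩ sidePos u v)
      (hP.subset inter_subset_left) (by
        by_contra! h
        exact hcol (collinear_of_forall_orient_eq_zero h))
  have hK := convex_convexHull ℝ P
  have hPK : P ⊆ convexHull ℝ P := subset_convexHull ℝ P
  have hu := cLayer_two_subset_interior he.1
  have hv := cLayer_two_subset_interior he.2.1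
  have hside : ∀ z ∈ P, z ∈ sidePos u v → z ∉ interior (convexHull ℝ P) :=
    fun _ => notMem_interior_of_mem_sidePos hP hH
  have hX : {u, v, p, q, r} ⊆ P := by
    simp [insert_subset_iff, cLayer_two_subset he.1, cLayer_two_subset he.2.1, hpP, hqP, hrP]
  refine hpent ⟨{u, v, p, q, r}, hX, ncard_pentagon he.2.2.1 hp hq hr hpqr,
    strictlyConvexPos_pentagon hK he.2.2.1 hu hv ⟨hPK hpP, hside p hpP hp⟩
      ⟨hPK hqP, hside q hqP hq⟩ ⟨hPK hrP, hside r hrP hr⟩ hp hq hr hpqr,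
    inter_convexHull_pentagon hK hPK hX hu hv hp hq hr
      (fun _ => notMem_openSegment_of_isEdgeOf_cLayer_two hP he) hside
      fun z hz hzH => hempty z ⟨hz, hzH⟩⟩

end Layers

theorem statement5_general (ℓ : ℕ) (P : Set Pt) (hP : P.Finite)
    (hpent : ¬ HasEmptyPentagon P)
    (A : Set Pt) (hA : HullMinimalWeakGon P A (8 * ℓ))
    (B : Set Pt) (hB : B = cLayer P 2)
    (u v : Pt) (he : IsEdgeOf B u v) (H : Set Pt) (hH : IsPosSide B u v H) :
    Collinear ℝ (A ∩ H) := by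
  subst hB
  have hA_side : ∀ {u v : Pt}, IsEdgeOf (cLayer P 2) u v → sidePos u v ∩ cLayer P 2 = ∅ →
      Collinear ℝ (A ∩ sidePos u v) := fun he hH =>
    (collinear_inter_sidePos_of_isEdgeOf_cLayer_two hP hpent he hH).subset
      (inter_subset_inter_left _ hA.1)
  obtain ⟨rfl | rfl, hHB⟩ := hH
  · exact hA_side he hHB
  · rw [sideNeg_eq_sidePos_swap] at hHB ⊢
    exact hA_side he.symm hHB

/-- (Observation 2.) With `P` having no `ℓ` collinear points
and no empty pentagon, `A` a hull-minimal weakly convex `8ℓ`-gon with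
`P ⊆ conv A`, and `B` the second convex layer: for every edge `b` of `B`,
the set `A ∩ b⁺` is collinear. -/
theorem statement5 (ℓ : ℕ) (hℓ : 2 ≤ ℓ) (P : Set Pt) (hP : P.Finite)
    (hcol : ¬ HasCollinearPoints P ℓ) (hpent : ¬ HasEmptyPentagon P)
    (A : Set Pt) (hA : HullMinimalWeakGon P A (8 * ℓ)) (hPA : P ⊆ convexHull ℝ A)
    (B : Set Pt) (hB : B = cLayer P 2) (hBne : B.Nonempty)
    (u v : Pt) (he : IsEdgeOf B u v) (H : Set Pt) (hH : IsPosSide B u v H) :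
    Collinear ℝ (A ∩ H) :=
  statement5_general ℓ P hP hpent A hA B hB u v he H hH
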